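/- arXiv:1210.2617 — 7 statements merged into one kernel-verified Lean document; each statement's English description precedes it below -/
import Mathlib

section
/- If in addition h(x) > 0 for all x ∈ (α, β) (Case I of the paper: 𝓛g is positive on the whole interval), then: (i) g(x) < 0 for all x ∈ (α, β); (ii) the function x ↦ g(x)/ψ(x) is strictly increasing on (α, β); and (iii) the function x ↦ g(x)/φ(x) is strictly decreasing on (α, β). -/
open MeasureTheory Set

lemma pos_int_Ioo {f : ℝ → ℝ} {a b : ℝ} (hab : a < b)
    (hf : IntegrableOn f (Ioo a b)) (hposf : ∀ x ∈ Ioo a b, 0 < f x) :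
    0 < ∫ x in Ioo a b, f x := by
  have h1 : 0 ≤ᵐ[volume.restrict (Ioo a b)] f :=
    (ae_restrict_iff' measurableSet_Ioo).2 (ae_of_all _ fun x hx => (hposf x hx).le)
  rw [setIntegral_pos_iff_support_of_nonneg_ae h1 hf]
  refine lt_of_lt_of_le ?_ (measure_mono fun x hx => ⟨ne_of_gt (hposf x hx), hx⟩)
  rw [Real.volume_Ioo]
  exact ENNReal.ofReal_pos.2 (sub_pos.2 hab)

/-- Case I: if `𝓛g` has positive density on the whole interval then `g < 0`,
`g/ψ` is strictly increasing and `g/φ` is strictly decreasing. -/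
theorem stmt_1
    (α β : ℝ) (hαβ : α < β)
    (φ ψ φ' ψ' k h g : ℝ → ℝ)
    (hφd : ∀ x ∈ Ioo α β, HasDerivAt φ (φ' x) x)
    (hψd : ∀ x ∈ Ioo α β, HasDerivAt ψ (ψ' x) x)
    (hφpos : ∀ x ∈ Ioo α β, 0 < φ x)
    (hφ'neg : ∀ x ∈ Ioo α β, φ' x < 0)
    (hψpos : ∀ x ∈ Ioo α β, 0 < ψ x)
    (hψ'pos : ∀ x ∈ Ioo α β, 0 < ψ' x)
    (hk : ContinuousOn k (Ioo α β))
    (hkpos : ∀ x ∈ Ioo α β, 0 < k x)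
    (hh : ContinuousOn h (Ioo α β))
    (hΦh : IntegrableOn (fun s => φ s * k s * h s) (Ioo α β))
    (hΨh : IntegrableOn (fun s => ψ s * k s * h s) (Ioo α β))
    (hg : ∀ x ∈ Ioo α β, g x =
      -(φ x * (∫ s in Ioo α x, ψ s * k s * h s) +
        ψ x * (∫ s in Ioo x β, φ s * k s * h s)))
    (hpos : ∀ x ∈ Ioo α β, 0 < h x) :
    (∀ x ∈ Ioo α β, g x < 0) ∧
    StrictMonoOn (fun x => g x / ψ x) (Ioo α β) ∧
    StrictAntiOn (fun x => g x / φ x) (Ioo α β) := by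
  -- pointwise positivity of integrands
  have hΨpos : ∀ s ∈ Ioo α β, 0 < ψ s * k s * h s := fun s hs =>
    mul_pos (mul_pos (hψpos s hs) (hkpos s hs)) (hpos s hs)
  have hΦpos : ∀ s ∈ Ioo α β, 0 < φ s * k s * h s := fun s hs =>
    mul_pos (mul_pos (hφpos s hs) (hkpos s hs)) (hpos s hs)
  -- strict monotonicity of φ and ψ
  have hφanti : StrictAntiOn φ (Ioo α β) := by
    apply strictAntiOn_of_deriv_neg (convex_Ioo α β)
      (fun s hs => (hφd s hs).continuousAt.continuousWithinAt)
    intro s hs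
    rw [interior_Ioo] at hs
    rw [(hφd s hs).deriv]
    exact hφ'neg s hs
  have hψmono : StrictMonoOn ψ (Ioo α β) := by
    apply strictMonoOn_of_deriv_pos (convex_Ioo α β)
      (fun s hs => (hψd s hs).continuousAt.continuousWithinAt)
    intro s hs
    rw [interior_Ioo] at hs
    rw [(hψd s hs).deriv]
    exact hψ'pos s hs
  -- interval integrability helper
  have hint : ∀ (f : ℝ → ℝ), IntegrableOn f (Ioo α β) → ∀ a b : ℝ, α ≤ a → a ≤ b → b ≤ β →
      IntervalIntegrable f volume a b := by
    intro f hf a b h1 h2 h3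
    rw [intervalIntegrable_iff, uIoc_of_le h2, integrableOn_Ioc_iff_integrableOn_Ioo]
    exact hf.mono_set (Ioo_subset_Ioo h1 h3)
  have hconv : ∀ (f : ℝ → ℝ) (a b : ℝ), a ≤ b →
      (∫ s in Ioo a b, f s) = ∫ s in a..b, f s := by
    intro f a b hab
    rw [intervalIntegral.integral_of_le hab, integral_Ioc_eq_integral_Ioo]
  -- additivity of the integrals
  have hadd : ∀ (f : ℝ → ℝ), IntegrableOn f (Ioo α β) → ∀ a b c : ℝ,
      α ≤ a → a ≤ b → b ≤ c → c ≤ β →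
      (∫ s in Ioo a c, f s) = (∫ s in Ioo a b, f s) + ∫ s in Ioo b c, f s := by
    intro f hf a b c h1 h2 h3 h4
    rw [hconv f a c (h2.trans h3), hconv f a b h2, hconv f b c h3]
    exact (intervalIntegral.integral_add_adjacent_intervals
      (hint f hf a b h1 h2 (h3.trans h4)) (hint f hf b c (h1.trans h2) h3 h4)).symm
  -- positivity of A and B
  have hApos : ∀ x ∈ Ioo α β, 0 < ∫ s in Ioo α x, ψ s * k s * h s := by
    intro x hx
    exact pos_int_Ioo hx.1 (hΨh.mono_set (Ioo_subset_Ioo le_rfl hx.2.le))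
      (fun s hs => hΨpos s ⟨hs.1, hs.2.trans hx.2⟩)
  have hBpos : ∀ x ∈ Ioo α β, 0 < ∫ s in Ioo x β, φ s * k s * h s := by
    intro x hx
    exact pos_int_Ioo hx.2 (hΦh.mono_set (Ioo_subset_Ioo hx.1.le le_rfl))
      (fun s hs => hΦpos s ⟨hx.1.trans hs.1, hs.2⟩)
  have hneg : ∀ x ∈ Ioo α β, g x < 0 := by
    intro x hx
    rw [hg x hx]
    have := add_pos (mul_pos (hφpos x hx) (hApos x hx)) (mul_pos (hψpos x hx) (hBpos x hx))
    linarith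
  refine ⟨hneg, ?_, ?_⟩
  all_goals {
    intro x hx y hy hxy
    have hsub : Ioo x y ⊆ Ioo α β := Ioo_subset_Ioo hx.1.le hy.2.le
    set Ax := ∫ s in Ioo α x, ψ s * k s * h s with hAx
    set Ay := ∫ s in Ioo α y, ψ s * k s * h s with hAy
    set Bx := ∫ s in Ioo x β, φ s * k s * h s with hBx
    set By := ∫ s in Ioo y β, φ s * k s * h s with hBy
    set Iψ := ∫ s in Ioo x y, ψ s * k s * h s with hIψ
    set Iφ := ∫ s in Ioo x y, φ s * k s * h s with hIφ
    have hAadd : Ay = Ax + Iψ :=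
      hadd _ hΨh α x y le_rfl hx.1.le hxy.le hy.2.le
    have hBadd : Bx = Iφ + By :=
      hadd _ hΦh x y β hx.1.le hxy.le hy.2.le le_rfl
    have hAx0 : 0 < Ax := hApos x hx
    have hBy0 : 0 < By := hBpos y hy
    have hφy : 0 < φ y := hφpos y hy
    have hφx : 0 < φ x := hφpos x hx
    have hψx : 0 < ψ x := hψpos x hx
    have hψy : 0 < ψ y := hψpos y hy
    have hφlt : φ y < φ x := hφanti hx hy hxy
    have hψlt : ψ x < ψ y := hψmono hx hy hxy
    have hIφint : IntegrableOn (fun s => φ s * k s * h s) (Ioo x y) := hΦh.mono_set hsub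
    have hIψint : IntegrableOn (fun s => ψ s * k s * h s) (Ioo x y) := hΨh.mono_set hsub
    -- key integral inequality hJ : φ y * Iψ < ψ y * Iφ
    have hJ : φ y * Iψ < ψ y * Iφ := by
      have hJ0 : 0 < ∫ s in Ioo x y,
          (ψ y * (φ s * k s * h s) - φ y * (ψ s * k s * h s)) := by
        apply pos_int_Ioo hxy ((hIφint.const_mul _).sub (hIψint.const_mul _))
        intro s hs
        have hs' := hsub hs
        have hkh : 0 < k s * h s := mul_pos (hkpos s hs') (hpos s hs')
        have h1 : ψ s * φ y < ψ y * φ s :=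
          mul_lt_mul'' (hψmono hs' hy hs.2) (hφanti hs' hy hs.2)
            (hψpos s hs').le (hφpos y hy).le
        show (0:ℝ) < ψ y * (φ s * k s * h s) - φ y * (ψ s * k s * h s)
        nlinarith [mul_pos (sub_pos.2 h1) hkh]
      have : (∫ s in Ioo x y, (ψ y * (φ s * k s * h s) - φ y * (ψ s * k s * h s)))
          = ψ y * Iφ - φ y * Iψ := by
        rw [integral_sub (hIφint.const_mul _) (hIψint.const_mul _),
          integral_const_mul, integral_const_mul]
      rw [this] at hJ0; linarith
    -- key integral inequality hK : ψ x * Iφ < φ x * Iψ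
    have hK : ψ x * Iφ < φ x * Iψ := by
      have hK0 : 0 < ∫ s in Ioo x y,
          (φ x * (ψ s * k s * h s) - ψ x * (φ s * k s * h s)) := by
        apply pos_int_Ioo hxy ((hIψint.const_mul _).sub (hIφint.const_mul _))
        intro s hs
        have hs' := hsub hs
        have hkh : 0 < k s * h s := mul_pos (hkpos s hs') (hpos s hs')
        have h1 : ψ x * φ s < ψ s * φ x :=
          mul_lt_mul'' (hψmono hx hs' hs.1) (hφanti hx hs' hs.1)
            hψx.le (hφpos s hs').le
        show (0:ℝ) < φ x * (ψ s * k s * h s) - ψ x * (φ s * k s * h s)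
        nlinarith [mul_pos (sub_pos.2 h1) hkh]
      have : (∫ s in Ioo x y, (φ x * (ψ s * k s * h s) - ψ x * (φ s * k s * h s)))
          = φ x * Iψ - ψ x * Iφ := by
        rw [integral_sub (hIψint.const_mul _) (hIφint.const_mul _),
          integral_const_mul, integral_const_mul]
      rw [this] at hK0; linarith
    simp only
    rw [hg x hx, hg y hy, div_lt_div_iff₀ (by positivity) (by positivity), ← hAx, ← hAy, ← hBx, ← hBy, hAadd, hBadd]
    have hr : φ y * ψ x < φ x * ψ y := mul_lt_mul'' hφlt hψlt hφy.le hψx.le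
    nlinarith [mul_lt_mul_of_pos_left hJ hψx, mul_lt_mul_of_pos_left hK hφy,
      mul_le_mul_of_nonneg_right hr.le hAx0.le, mul_le_mul_of_nonneg_right hr.le hBy0.le]
  }
end

section
/- Suppose that there is a point c ∈ (α, β) with h(x) > 0 for all x ∈ (α, c) and h(x) < 0 for all x ∈ (c, β), and that ∫_{(α,β)} Ψ(s)·h(s) ds < 0 (Case III of the paper: call-type payoff). Then there is a unique point x_ψ ∈ (c, β) with ∫_{(α,x_ψ)} Ψ(s)·h(s) ds = 0; the function x ↦ g(x)/ψ(x) is strictly increasing on (α, x_ψ) and strictly decreasing on (x_ψ, β); consequently x_ψ is the unique global maximiser of g/ψ on (α, β), the constant B := g(x_ψ)/ψ(x_ψ) is strictly positive, and g(x) ≤ B·ψ(x) for all x ∈ (α, β) with equality only at x = x_ψ. -/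
open MeasureTheory Set

/-- Case III (call-type payoff): unique free boundary `x_ψ`, monotonicity of
`g/ψ` on either side of it, positivity of `B = g(x_ψ)/ψ(x_ψ)` and the
majorisation `g ≤ B·ψ` with equality only at `x_ψ`. -/
theorem stmt_3
    (α β : ℝ) (hαβ : α < β)
    (φ ψ φ' ψ' k h g : ℝ → ℝ)
    (hφd : ∀ x ∈ Ioo α β, HasDerivAt φ (φ' x) x)
    (hψd : ∀ x ∈ Ioo α β, HasDerivAt ψ (ψ' x) x)
    (hφpos : ∀ x ∈ Ioo α β, 0 < φ x)
    (hφ'neg : ∀ x ∈ Ioo α β, φ' x < 0)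
    (hψpos : ∀ x ∈ Ioo α β, 0 < ψ x)
    (hψ'pos : ∀ x ∈ Ioo α β, 0 < ψ' x)
    (hk : ContinuousOn k (Ioo α β))
    (hkpos : ∀ x ∈ Ioo α β, 0 < k x)
    (hh : ContinuousOn h (Ioo α β))
    (hΦh : IntegrableOn (fun s => φ s * k s * h s) (Ioo α β))
    (hΨh : IntegrableOn (fun s => ψ s * k s * h s) (Ioo α β))
    (hg : ∀ x ∈ Ioo α β, g x =
      -(φ x * (∫ s in Ioo α x, ψ s * k s * h s) +
        ψ x * (∫ s in Ioo x β, φ s * k s * h s)))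
    (c : ℝ) (hc : c ∈ Ioo α β)
    (hposh : ∀ x ∈ Ioo α c, 0 < h x)
    (hnegh : ∀ x ∈ Ioo c β, h x < 0)
    (hint : (∫ s in Ioo α β, ψ s * k s * h s) < 0) :
    ∃ xψ ∈ Ioo c β,
      (∫ s in Ioo α xψ, ψ s * k s * h s) = 0 ∧
      (∀ y ∈ Ioo c β, (∫ s in Ioo α y, ψ s * k s * h s) = 0 → y = xψ) ∧
      StrictMonoOn (fun x => g x / ψ x) (Ioo α xψ) ∧
      StrictAntiOn (fun x => g x / ψ x) (Ioo xψ β) ∧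
      0 < g xψ / ψ xψ ∧
      (∀ x ∈ Ioo α β, g x ≤ (g xψ / ψ xψ) * ψ x) ∧
      (∀ x ∈ Ioo α β, g x = (g xψ / ψ xψ) * ψ x → x = xψ) := by
  -- notation
  have hψne : ∀ x ∈ Ioo α β, ψ x ≠ 0 := fun x hx => (hψpos x hx).ne'
  have hφc : ContinuousOn φ (Ioo α β) :=
    fun x hx => ((hφd x hx).continuousAt).continuousWithinAt
  have hψc : ContinuousOn ψ (Ioo α β) :=
    fun x hx => ((hψd x hx).continuousAt).continuousWithinAt
  have hfc : ContinuousOn (fun s => ψ s * k s * h s) (Ioo α β) := (hψc.mul hk).mul hh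
  have hFc : ContinuousOn (fun s => φ s * k s * h s) (Ioo α β) := (hφc.mul hk).mul hh
  have hΨh' : IntegrableOn (fun s => ψ s * k s * h s) (Ioc α β) :=
    (integrableOn_Ioc_iff_integrableOn_Ioo).2 hΨh
  have hΦh' : IntegrableOn (fun s => φ s * k s * h s) (Ioc α β) :=
    (integrableOn_Ioc_iff_integrableOn_Ioo).2 hΦh
  have hII : ∀ x ∈ Icc α β, IntervalIntegrable (fun s => ψ s * k s * h s) volume α x := by
    intro x hx
    rw [intervalIntegrable_iff_integrableOn_Ioc_of_le hx.1]
    exact hΨh'.mono_set (Ioc_subset_Ioc le_rfl hx.2)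
  have hIIΦ : ∀ x ∈ Icc α β, IntervalIntegrable (fun s => φ s * k s * h s) volume α x := by
    intro x hx
    rw [intervalIntegrable_iff_integrableOn_Ioc_of_le hx.1]
    exact hΦh'.mono_set (Ioc_subset_Ioc le_rfl hx.2)
  have hFeq : ∀ x, α ≤ x →
      (∫ s in Ioo α x, ψ s * k s * h s) = ∫ s in α..x, ψ s * k s * h s := by
    intro x hx
    rw [intervalIntegral.integral_of_le hx, MeasureTheory.integral_Ioc_eq_integral_Ioo]
  have hFeqΦ : ∀ x, α ≤ x →
      (∫ s in Ioo α x, φ s * k s * h s) = ∫ s in α..x, φ s * k s * h s := by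
    intro x hx
    rw [intervalIntegral.integral_of_le hx, MeasureTheory.integral_Ioc_eq_integral_Ioo]
  -- continuity of the primitive F
  have hFcont : ContinuousOn (fun x => ∫ s in Ioo α x, ψ s * k s * h s) (Icc α β) := by
    have h1 := intervalIntegral.continuousOn_primitive (μ := volume)
      (f := fun s => ψ s * k s * h s) (a := α) (b := β)
      ((integrableOn_Icc_iff_integrableOn_Ioo).2 hΨh)
    exact h1.congr fun x _ => MeasureTheory.integral_Ioc_eq_integral_Ioo.symm
  -- derivative of the primitives
  have hFd : ∀ x ∈ Ioo α β,
      HasDerivAt (fun y => ∫ s in Ioo α y, ψ s * k s * h s) (ψ x * k x * h x) x := by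
    intro x hx
    have hi : IntervalIntegrable (fun s => ψ s * k s * h s) volume α x :=
      hII x ⟨hx.1.le, hx.2.le⟩
    have hmeas := hfc.stronglyMeasurableAtFilter (μ := volume) isOpen_Ioo x hx
    have hca : ContinuousAt (fun s => ψ s * k s * h s) x :=
      hfc.continuousAt (Ioo_mem_nhds hx.1 hx.2)
    have hD := intervalIntegral.integral_hasDerivAt_right hi hmeas hca
    refine hD.congr_of_eventuallyEq ?_
    filter_upwards [Ioo_mem_nhds hx.1 hx.2] with y hy
    exact hFeq y hy.1.le
  have hFdΦ : ∀ x ∈ Ioo α β,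
      HasDerivAt (fun y => ∫ s in Ioo α y, φ s * k s * h s) (φ x * k x * h x) x := by
    intro x hx
    have hi : IntervalIntegrable (fun s => φ s * k s * h s) volume α x :=
      hIIΦ x ⟨hx.1.le, hx.2.le⟩
    have hmeas := hFc.stronglyMeasurableAtFilter (μ := volume) isOpen_Ioo x hx
    have hca : ContinuousAt (fun s => φ s * k s * h s) x :=
      hFc.continuousAt (Ioo_mem_nhds hx.1 hx.2)
    have hD := intervalIntegral.integral_hasDerivAt_right hi hmeas hca
    refine hD.congr_of_eventuallyEq ?_
    filter_upwards [Ioo_mem_nhds hx.1 hx.2] with y hy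
    exact hFeqΦ y hy.1.le
  -- split the tail integral
  have hsplit : ∀ x ∈ Ioo α β, (∫ s in Ioo x β, φ s * k s * h s)
      = (∫ s in Ioo α β, φ s * k s * h s) - ∫ s in Ioo α x, φ s * k s * h s := by
    intro x hx
    have hdis : Disjoint (Ioc α x) (Ioo x β) := by
      rw [Set.disjoint_left]
      rintro y ⟨_, h1⟩ ⟨h2, _⟩
      exact absurd h1 (not_le.2 h2)
    have hunion : Ioc α x ∪ Ioo x β = Ioo α β := Ioc_union_Ioo_eq_Ioo hx.1.le hx.2
    have hadd := MeasureTheory.setIntegral_union (f := fun s => φ s * k s * h s)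
      (μ := volume) hdis measurableSet_Ioo
      (hΦh'.mono_set (Ioc_subset_Ioc le_rfl hx.2.le))
      (hΦh.mono_set (Ioo_subset_Ioo hx.1.le le_rfl))
    rw [hunion] at hadd
    rw [hadd, MeasureTheory.integral_Ioc_eq_integral_Ioo]
    ring
  -- derivative of g/ψ
  have hGd : ∀ x ∈ Ioo α β, HasDerivAt (fun y => g y / ψ y)
      ((∫ s in Ioo α x, ψ s * k s * h s) * (φ x * ψ' x - φ' x * ψ x) / (ψ x) ^ 2) x := by
    intro x hx
    have h1 := hFd x hx
    have h2 := hFdΦ x hx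
    have hD : HasDerivAt (fun y => -(φ y * (∫ s in Ioo α y, ψ s * k s * h s)
        + ψ y * ((∫ s in Ioo α β, φ s * k s * h s) - ∫ s in Ioo α y, φ s * k s * h s)))
        (-((φ' x * (∫ s in Ioo α x, ψ s * k s * h s) + φ x * (ψ x * k x * h x))
          + (ψ' x * ((∫ s in Ioo α β, φ s * k s * h s) - ∫ s in Ioo α x, φ s * k s * h s)
            + ψ x * (0 - φ x * k x * h x)))) x :=
      (((hφd x hx).mul h1).add ((hψd x hx).mul ((hasDerivAt_const x _).sub h2))).neg
    have hEq : g =ᶠ[nhds x] fun y => -(φ y * (∫ s in Ioo α y, ψ s * k s * h s)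
        + ψ y * ((∫ s in Ioo α β, φ s * k s * h s) - ∫ s in Ioo α y, φ s * k s * h s)) := by
      filter_upwards [Ioo_mem_nhds hx.1 hx.2] with y hy
      rw [hg y hy, hsplit y hy]
    have hgd : HasDerivAt g
        (-((φ' x * (∫ s in Ioo α x, ψ s * k s * h s) + φ x * (ψ x * k x * h x))
          + (ψ' x * ((∫ s in Ioo α β, φ s * k s * h s) - ∫ s in Ioo α x, φ s * k s * h s)
            + ψ x * (0 - φ x * k x * h x)))) x := hD.congr_of_eventuallyEq hEq
    have hdiv := hgd.div (hψd x hx) (hψne x hx)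
    refine hdiv.congr_deriv ?_
    rw [hg x hx, hsplit x hx]
    field_simp
    ring
  have hGcont : ContinuousOn (fun y => g y / ψ y) (Ioo α β) :=
    fun x hx => ((hGd x hx).continuousAt).continuousWithinAt
  -- F is positive up to c
  have hFc_pos : ∀ x ∈ Ioc α c, 0 < ∫ s in Ioo α x, ψ s * k s * h s := by
    intro x hx
    rw [hFeq x hx.1.le]
    refine intervalIntegral.intervalIntegral_pos_of_pos_on (hII x ⟨hx.1.le, hx.2.trans hc.2.le⟩) ?_ hx.1
    intro y hy
    have hy' : y ∈ Ioo α β := ⟨hy.1, (hy.2.trans_le hx.2).trans hc.2⟩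
    exact mul_pos (mul_pos (hψpos y hy') (hkpos y hy'))
      (hposh y ⟨hy.1, hy.2.trans_le hx.2⟩)
  -- F is strictly decreasing on [c, β]
  have hanti : StrictAntiOn (fun x => ∫ s in Ioo α x, ψ s * k s * h s) (Icc c β) := by
    refine strictAntiOn_of_deriv_neg (convex_Icc c β)
      (hFcont.mono (Icc_subset_Icc hc.1.le le_rfl)) ?_
    intro x hx
    rw [interior_Icc] at hx
    have hx' : x ∈ Ioo α β := ⟨hc.1.trans hx.1, hx.2⟩
    rw [(hFd x hx').deriv]
    exact mul_neg_of_pos_of_neg (mul_pos (hψpos x hx') (hkpos x hx')) (hnegh x hx)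
  have hFcpos : 0 < ∫ s in Ioo α c, ψ s * k s * h s := hFc_pos c ⟨hc.1, le_rfl⟩
  -- existence of the zero
  obtain ⟨xψ, hxmem, hFx⟩ : ∃ x ∈ Icc c β, (∫ s in Ioo α x, ψ s * k s * h s) = 0 := by
    have hIVT := intermediate_value_Icc' hc.2.le
      (hFcont.mono (Icc_subset_Icc hc.1.le le_rfl))
    have h0 : (0 : ℝ) ∈ Icc (∫ s in Ioo α β, ψ s * k s * h s)
        (∫ s in Ioo α c, ψ s * k s * h s) := ⟨hint.le, hFcpos.le⟩
    obtain ⟨x, hx, hx0⟩ := hIVT h0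
    exact ⟨x, hx, hx0⟩
  have hxc : c < xψ := by
    rcases eq_or_lt_of_le hxmem.1 with heq | hlt
    · exact absurd (heq ▸ hFx) hFcpos.ne'
    · exact hlt
  have hxβ : xψ < β := by
    rcases eq_or_lt_of_le hxmem.2 with heq | hlt
    · rw [heq] at hFx; exact absurd (hFx ▸ hint) (lt_irrefl 0)
    · exact hlt
  have hxIoo : xψ ∈ Ioo α β := ⟨hc.1.trans hxc, hxβ⟩
  -- sign of F on either side
  have hFpos : ∀ x ∈ Ioo α xψ, 0 < ∫ s in Ioo α x, ψ s * k s * h s := by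
    intro x hx
    rcases le_or_gt x c with hle | hlt
    · exact hFc_pos x ⟨hx.1, hle⟩
    · simpa only [hFx] using hanti ⟨hlt.le, (hx.2.trans hxβ).le⟩ ⟨hxc.le, hxβ.le⟩ hx.2
  have hFneg : ∀ x ∈ Ioo xψ β, (∫ s in Ioo α x, ψ s * k s * h s) < 0 := by
    intro x hx
    simpa only [hFx] using hanti ⟨hxc.le, hxβ.le⟩ ⟨(hxc.trans hx.1).le, hx.2.le⟩ hx.1
  -- Wronskian positivity
  have hW : ∀ x ∈ Ioo α β, 0 < φ x * ψ' x - φ' x * ψ x := by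
    intro x hx
    have h1 : 0 < φ x * ψ' x := mul_pos (hφpos x hx) (hψ'pos x hx)
    have h2 : φ' x * ψ x < 0 := mul_neg_of_neg_of_pos (hφ'neg x hx) (hψpos x hx)
    linarith
  -- monotonicity of g/ψ
  have hmonoIoc : StrictMonoOn (fun x => g x / ψ x) (Ioc α xψ) := by
    have hsub : Ioc α xψ ⊆ Ioo α β := fun y hy => ⟨hy.1, lt_of_le_of_lt hy.2 hxβ⟩
    refine strictMonoOn_of_deriv_pos (convex_Ioc α xψ) (hGcont.mono hsub) ?_
    intro x hx
    rw [interior_Ioc] at hx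
    have hx' : x ∈ Ioo α β := ⟨hx.1, hx.2.trans hxβ⟩
    rw [(hGd x hx').deriv]
    exact div_pos (mul_pos (hFpos x hx) (hW x hx')) (pow_pos (hψpos x hx') 2)
  have hantiIco : StrictAntiOn (fun x => g x / ψ x) (Ico xψ β) := by
    have hsub : Ico xψ β ⊆ Ioo α β := fun y hy => ⟨lt_of_lt_of_le hxIoo.1 hy.1, hy.2⟩
    refine strictAntiOn_of_deriv_neg (convex_Ico xψ β) (hGcont.mono hsub) ?_
    intro x hx
    rw [interior_Ico] at hx
    have hx' : x ∈ Ioo α β := ⟨hxIoo.1.trans hx.1, hx.2⟩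
    rw [(hGd x hx').deriv]
    exact div_neg_of_neg_of_pos (mul_neg_of_neg_of_pos (hFneg x hx) (hW x hx'))
      (pow_pos (hψpos x hx') 2)
  -- positivity of B
  have hBi_neg : (∫ s in Ioo xψ β, φ s * k s * h s) < 0 := by
    have hi : IntervalIntegrable (fun s => -(φ s * k s * h s)) volume xψ β := by
      rw [intervalIntegrable_iff_integrableOn_Ioc_of_le hxβ.le]
      exact (hΦh'.mono_set (Ioc_subset_Ioc hxIoo.1.le le_rfl)).neg
    have hpos := intervalIntegral.intervalIntegral_pos_of_pos_on hi (fun y hy => by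
      have hy' : y ∈ Ioo α β := ⟨hxIoo.1.trans hy.1, hy.2⟩
      have : φ y * k y * h y < 0 :=
        mul_neg_of_pos_of_neg (mul_pos (hφpos y hy') (hkpos y hy'))
          (hnegh y ⟨hxc.trans hy.1, hy.2⟩)
      linarith) hxβ
    rw [intervalIntegral.integral_neg] at hpos
    have : (∫ s in xψ..β, φ s * k s * h s) < 0 := by linarith
    rwa [intervalIntegral.integral_of_le hxβ.le,
      MeasureTheory.integral_Ioc_eq_integral_Ioo] at this
  have hB : g xψ / ψ xψ = -(∫ s in Ioo xψ β, φ s * k s * h s) := by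
    have hψ0 := hψne xψ hxIoo
    rw [hg xψ hxIoo, hFx, mul_zero, zero_add, neg_div, mul_comm, mul_div_assoc,
      div_self hψ0, mul_one]
  have hBpos : 0 < g xψ / ψ xψ := by
    rw [hB]; linarith
  -- comparison with value at xψ
  have hlt_of_ne : ∀ x ∈ Ioo α β, x ≠ xψ → g x / ψ x < g xψ / ψ xψ := by
    intro x hx hne
    rcases lt_or_gt_of_ne hne with hlt | hgt
    · exact hmonoIoc ⟨hx.1, hlt.le⟩ ⟨hxIoo.1, le_rfl⟩ hlt
    · exact hantiIco ⟨le_rfl, hxIoo.2⟩ ⟨hgt.le, hx.2⟩ hgt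
  refine ⟨xψ, ⟨hxc, hxβ⟩, hFx, ?_, hmonoIoc.mono Ioo_subset_Ioc_self,
    hantiIco.mono Ioo_subset_Ico_self, hBpos, ?_, ?_⟩
  · intro y hy hFy
    exact hanti.injOn ⟨hy.1.le, hy.2.le⟩ ⟨hxc.le, hxβ.le⟩ (hFy.trans hFx.symm)
  · intro x hx
    rcases eq_or_ne x xψ with heq | hne
    · subst heq
      rw [div_mul_cancel₀ _ (hψne x hx)]
    · have hle := (hlt_of_ne x hx hne).le
      calc g x = g x / ψ x * ψ x := (div_mul_cancel₀ _ (hψne x hx)).symm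
        _ ≤ g xψ / ψ xψ * ψ x := mul_le_mul_of_nonneg_right hle (hψpos x hx).le
  · intro x hx hxeq
    by_contra hne
    have hlt := hlt_of_ne x hx hne
    rw [div_lt_div_iff₀ (hψpos x hx) (hψpos xψ hxIoo)] at hlt
    have : g x * ψ xψ = g xψ / ψ xψ * ψ x * ψ xψ := by rw [hxeq]
    have heq2 : g xψ / ψ xψ * ψ x * ψ xψ = g xψ * ψ x := by
      rw [mul_right_comm, div_mul_cancel₀ _ (hψne xψ hxIoo)]
    nlinarith [hψpos x hx, hψpos xψ hxIoo]
end

section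
/- Suppose that there is a point c ∈ (α, β) with h(x) < 0 for all x ∈ (α, c) and h(x) > 0 for all x ∈ (c, β), and that ∫_{(α,β)} Φ(s)·h(s) ds < 0 (Case IV of the paper: put-type payoff). Then there is a unique point x_φ ∈ (α, c) with ∫_{(x_φ,β)} Φ(s)·h(s) ds = 0; the function x ↦ g(x)/φ(x) is strictly increasing on (α, x_φ) and strictly decreasing on (x_φ, β); consequently x_φ is the unique global maximiser of g/φ on (α, β), the constant A := g(x_φ)/φ(x_φ) is strictly positive, and g(x) ≤ A·φ(x) for all x ∈ (α, β) with equality only at x = x_φ. -/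
open MeasureTheory Set

/-- Case IV (put-type payoff): unique free boundary `x_φ`, monotonicity of
`g/φ` on either side of it, positivity of `A = g(x_φ)/φ(x_φ)` and the
majorisation `g ≤ A·φ` with equality only at `x_φ`. -/
theorem stmt_4
    (α β : ℝ) (hαβ : α < β)
    (φ ψ φ' ψ' k h g : ℝ → ℝ)
    (hφd : ∀ x ∈ Ioo α β, HasDerivAt φ (φ' x) x)
    (hψd : ∀ x ∈ Ioo α β, HasDerivAt ψ (ψ' x) x)
    (hφpos : ∀ x ∈ Ioo α β, 0 < φ x)
    (hφ'neg : ∀ x ∈ Ioo α β, φ' x < 0)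
    (hψpos : ∀ x ∈ Ioo α β, 0 < ψ x)
    (hψ'pos : ∀ x ∈ Ioo α β, 0 < ψ' x)
    (hk : ContinuousOn k (Ioo α β))
    (hkpos : ∀ x ∈ Ioo α β, 0 < k x)
    (hh : ContinuousOn h (Ioo α β))
    (hΦh : IntegrableOn (fun s => φ s * k s * h s) (Ioo α β))
    (hΨh : IntegrableOn (fun s => ψ s * k s * h s) (Ioo α β))
    (hg : ∀ x ∈ Ioo α β, g x =
      -(φ x * (∫ s in Ioo α x, ψ s * k s * h s) +
        ψ x * (∫ s in Ioo x β, φ s * k s * h s)))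
    (c : ℝ) (hc : c ∈ Ioo α β)
    (hnegh : ∀ x ∈ Ioo α c, h x < 0)
    (hposh : ∀ x ∈ Ioo c β, 0 < h x)
    (hint : (∫ s in Ioo α β, φ s * k s * h s) < 0) :
    ∃ xφ ∈ Ioo α c,
      (∫ s in Ioo xφ β, φ s * k s * h s) = 0 ∧
      (∀ y ∈ Ioo α c, (∫ s in Ioo y β, φ s * k s * h s) = 0 → y = xφ) ∧
      StrictMonoOn (fun x => g x / φ x) (Ioo α xφ) ∧
      StrictAntiOn (fun x => g x / φ x) (Ioo xφ β) ∧
      0 < g xφ / φ xφ ∧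
      (∀ x ∈ Ioo α β, g x ≤ (g xφ / φ xφ) * φ x) ∧
      (∀ x ∈ Ioo α β, g x = (g xφ / φ xφ) * φ x → x = xφ) := by
  obtain ⟨hαc, hcβ⟩ := hc
  -- abbreviations
  set Φf : ℝ → ℝ := fun s => φ s * k s * h s with hΦf_def
  set Ψf : ℝ → ℝ := fun s => ψ s * k s * h s with hΨf_def
  set F : ℝ → ℝ := fun x => ∫ s in Ioo x β, Φf s with hF_def
  set G : ℝ → ℝ := fun x => ∫ t in α..x, Φf t with hG_def
  set P : ℝ → ℝ := fun x => ∫ t in α..x, Ψf t with hP_def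
  set T : ℝ := ∫ s in Ioo α β, Φf s with hT_def
  -- continuity of the integrands
  have hφc : ContinuousOn φ (Ioo α β) := fun x hx =>
    (hφd x hx).continuousAt.continuousWithinAt
  have hψc : ContinuousOn ψ (Ioo α β) := fun x hx =>
    (hψd x hx).continuousAt.continuousWithinAt
  have hΦfc : ContinuousOn Φf (Ioo α β) := (hφc.mul hk).mul hh
  have hΨfc : ContinuousOn Ψf (Ioo α β) := (hψc.mul hk).mul hh
  -- integrability on closed interval and interval integrability
  have hΦfIcc : IntegrableOn Φf (Icc α β) :=
    (integrableOn_Icc_iff_integrableOn_Ioo).mpr hΦh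
  have hΨfIcc : IntegrableOn Ψf (Icc α β) :=
    (integrableOn_Icc_iff_integrableOn_Ioo).mpr hΨh
  have hΦfII : ∀ {a b : ℝ}, a ∈ Icc α β → b ∈ Icc α β →
      IntervalIntegrable Φf volume a b := fun ha hb =>
    (hΦfIcc.mono_set (uIcc_subset_Icc ha hb)).intervalIntegrable
  have hΨfII : ∀ {a b : ℝ}, a ∈ Icc α β → b ∈ Icc α β →
      IntervalIntegrable Ψf volume a b := fun ha hb =>
    (hΨfIcc.mono_set (uIcc_subset_Icc ha hb)).intervalIntegrable
  have hαmem : α ∈ Icc α β := ⟨le_rfl, hαβ.le⟩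
  -- the key identity F = T - G on [α,β]
  have hFeq : ∀ x ∈ Icc α β, F x = T - G x := by
    intro x hx
    have hGx : G x = ∫ s in Ioo α x, Φf s := by
      show (∫ t in α..x, Φf t) = _
      rw [intervalIntegral.integral_of_le hx.1, integral_Ioc_eq_integral_Ioo]
    rcases eq_or_lt_of_le hx.2 with hxb | hxb
    · subst hxb
      have h1 : F x = 0 := by simp [hF_def]
      have h2 : G x = T := by rw [hGx]
      rw [h1, h2]; ring
    · have hsplit : Ioc α x ∪ Ioo x β = Ioo α β := Ioc_union_Ioo_eq_Ioo hx.1 hxb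
      have hdisj : Disjoint (Ioc α x) (Ioo x β) :=
        disjoint_left.mpr fun t ht ht' => absurd ht.2 (not_le.mpr ht'.1)
      have hi1 : IntegrableOn Φf (Ioc α x) :=
        hΦh.mono_set fun t ht => ⟨ht.1, lt_of_le_of_lt ht.2 hxb⟩
      have hi2 : IntegrableOn Φf (Ioo x β) :=
        hΦh.mono_set fun t ht => ⟨lt_of_le_of_lt hx.1 ht.1, ht.2⟩
      have := setIntegral_union hdisj measurableSet_Ioo hi1 hi2 (f := Φf) (μ := volume)
      rw [hsplit] at this
      rw [integral_Ioc_eq_integral_Ioo] at this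
      rw [hF_def, hT_def, hGx]
      simp only at this ⊢
      linarith [this]
  -- continuity of F on [α,β]
  have hGcont : ContinuousOn G (Icc α β) := by
    have := intervalIntegral.continuousOn_primitive_interval (a := α) (b := β) (μ := volume) (f := Φf)
      (by rwa [uIcc_of_le hαβ.le])
    rwa [uIcc_of_le hαβ.le] at this
  have hFcont : ContinuousOn F (Icc α β) :=
    (continuousOn_const.sub hGcont).congr hFeq
  -- derivative of F on (α,β)
  have hFd : ∀ x ∈ Ioo α β, HasDerivAt F (-(Φf x)) x := by
    intro x hx
    have hGd : HasDerivAt G (Φf x) x :=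
      intervalIntegral.integral_hasDerivAt_right
        (hΦfII hαmem (Ioo_subset_Icc_self hx))
        (ContinuousOn.stronglyMeasurableAtFilter isOpen_Ioo hΦfc x hx)
        (hΦfc.continuousAt (isOpen_Ioo.mem_nhds hx))
    have h1 : HasDerivAt (fun y => T - G y) (-(Φf x)) x := by
      have := (hasDerivAt_const x T).sub hGd
      rw [zero_sub] at this
      exact this
    refine h1.congr_of_eventuallyEq ?_
    filter_upwards [isOpen_Ioo.mem_nhds hx] with y hy
    exact hFeq y (Ioo_subset_Icc_self hy)
  -- sign of Φf
  have hΦfneg : ∀ x ∈ Ioo α c, Φf x < 0 := fun x hx =>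
    mul_neg_of_pos_of_neg
      (mul_pos (hφpos x ⟨hx.1, hx.2.trans hcβ⟩) (hkpos x ⟨hx.1, hx.2.trans hcβ⟩))
      (hnegh x hx)
  have hΦfpos : ∀ x ∈ Ioo c β, 0 < Φf x := fun x hx =>
    mul_pos
      (mul_pos (hφpos x ⟨hαc.trans hx.1, hx.2⟩) (hkpos x ⟨hαc.trans hx.1, hx.2⟩))
      (hposh x hx)
  -- F strictly increasing on [α,c]
  have hFmono : StrictMonoOn F (Icc α c) := by
    apply strictMonoOn_of_deriv_pos (convex_Icc α c)
      (hFcont.mono (Icc_subset_Icc le_rfl hcβ.le))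
    intro x hx
    rw [interior_Icc] at hx
    rw [(hFd x ⟨hx.1, hx.2.trans hcβ⟩).deriv]
    exact neg_pos.mpr (hΦfneg x hx)
  -- F strictly decreasing on [c,β]
  have hFanti : StrictAntiOn F (Icc c β) := by
    apply strictAntiOn_of_deriv_neg (convex_Icc c β)
      (hFcont.mono (Icc_subset_Icc hαc.le le_rfl))
    intro x hx
    rw [interior_Icc] at hx
    rw [(hFd x ⟨hαc.trans hx.1, hx.2⟩).deriv]
    exact neg_neg_iff_pos.mpr (hΦfpos x hx)
  have hFβ : F β = 0 := by simp [hF_def]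
  have hFα : F α = T := rfl
  have hFcpos : 0 < F c := by
    have := hFanti ⟨le_rfl, hcβ.le⟩ ⟨hcβ.le, le_rfl⟩ hcβ
    rw [hFβ] at this; exact this
  -- existence of the free boundary
  obtain ⟨xφ, hxφIoo, hFxφ⟩ :=
    intermediate_value_Ioo hαc.le (hFcont.mono (Icc_subset_Icc le_rfl hcβ.le))
      (show (0:ℝ) ∈ Ioo (F α) (F c) from ⟨by rw [hFα]; exact hint, hFcpos⟩)
  obtain ⟨hαxφ, hxφc⟩ := hxφIoo
  have hxφβ : xφ ∈ Ioo α β := ⟨hαxφ, hxφc.trans hcβ⟩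
  -- sign of F around the free boundary
  have hFneg : ∀ t, α < t → t < xφ → F t < 0 := by
    intro t ht htφ
    have := hFmono ⟨ht.le, (htφ.trans hxφc).le⟩ ⟨hαxφ.le, hxφc.le⟩ htφ
    rw [hFxφ] at this; exact this
  have hFpos' : ∀ t, xφ < t → t < β → 0 < F t := by
    intro t hφt htβ
    rcases le_or_gt t c with htc | htc
    · have := hFmono ⟨hαxφ.le, hxφc.le⟩ ⟨(hαxφ.trans hφt).le, htc⟩ hφt
      rw [hFxφ] at this; exact this
    · have := hFanti ⟨htc.le, htβ.le⟩ ⟨hcβ.le, le_rfl⟩ htβ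
      rw [hFβ] at this; exact this
  -- derivative of Q := g/φ on (α,β)
  have hQd : ∀ x ∈ Ioo α β,
      HasDerivAt (fun y => g y / φ y)
        (-((ψ' x * φ x - ψ x * φ' x) / φ x ^ 2 * F x)) x := by
    intro x hx
    have hφne : φ x ≠ 0 := (hφpos x hx).ne'
    have hPd : HasDerivAt P (Ψf x) x :=
      intervalIntegral.integral_hasDerivAt_right
        (hΨfII hαmem (Ioo_subset_Icc_self hx))
        (ContinuousOn.stronglyMeasurableAtFilter isOpen_Ioo hΨfc x hx)
        (hΨfc.continuousAt (isOpen_Ioo.mem_nhds hx))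
    have h1 : HasDerivAt (fun y => -(P y + ψ y / φ y * F y))
        (-(Ψf x + ((ψ' x * φ x - ψ x * φ' x) / φ x ^ 2 * F x +
          ψ x / φ x * -(Φf x)))) x :=
      (hPd.add (((hψd x hx).div (hφd x hx) hφne).mul (hFd x hx))).neg
    have hDeq : -(Ψf x + ((ψ' x * φ x - ψ x * φ' x) / φ x ^ 2 * F x +
        ψ x / φ x * -(Φf x))) = -((ψ' x * φ x - ψ x * φ' x) / φ x ^ 2 * F x) := by
      rw [hΨf_def, hΦf_def]
      field_simp
      ring
    rw [hDeq] at h1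
    refine h1.congr_of_eventuallyEq ?_
    filter_upwards [isOpen_Ioo.mem_nhds hx] with y hy
    have hφy : φ y ≠ 0 := (hφpos y hy).ne'
    have hPy : P y = ∫ s in Ioo α y, Ψf s := by
      show (∫ t in α..y, Ψf t) = _
      rw [intervalIntegral.integral_of_le hy.1.le, integral_Ioc_eq_integral_Ioo]
    rw [hg y hy]
    rw [show (∫ s in Ioo α y, ψ s * k s * h s) = P y from hPy.symm]
    show -(φ y * P y + ψ y * F y) / φ y = -(P y + ψ y / φ y * F y)
    field_simp
  -- positivity of the Wronskian factor
  have hWpos : ∀ x ∈ Ioo α β, 0 < (ψ' x * φ x - ψ x * φ' x) / φ x ^ 2 := by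
    intro x hx
    apply div_pos
    · have h1 := hψ'pos x hx
      have h2 := hφpos x hx
      have h3 := hψpos x hx
      have h4 := hφ'neg x hx
      nlinarith
    · exact pow_pos (hφpos x hx) 2
  -- monotone comparison lemmas
  have hQlt : ∀ x y : ℝ, α < x → x < y → y ≤ xφ → g x / φ x < g y / φ y := by
    intro x y hx hxy hy
    have hsub : Icc x y ⊆ Ioo α β :=
      Icc_subset_Ioo hx (lt_of_le_of_lt hy hxφβ.2)
    have hmono : StrictMonoOn (fun t => g t / φ t) (Icc x y) := by
      apply strictMonoOn_of_deriv_pos (convex_Icc x y)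
        (fun t ht => ((hQd t (hsub ht)).continuousAt).continuousWithinAt)
      intro t ht
      rw [interior_Icc] at ht
      have htβ : t ∈ Ioo α β := hsub (Ioo_subset_Icc_self ht)
      rw [(hQd t htβ).deriv]
      have hFt : F t < 0 := hFneg t htβ.1 (lt_of_lt_of_le ht.2 hy)
      have hW := hWpos t htβ
      nlinarith
    exact hmono ⟨le_rfl, hxy.le⟩ ⟨hxy.le, le_rfl⟩ hxy
  have hQgt : ∀ x y : ℝ, xφ ≤ x → x < y → y < β → g y / φ y < g x / φ x := by
    intro x y hx hxy hy
    have hsub : Icc x y ⊆ Ioo α β :=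
      Icc_subset_Ioo (lt_of_lt_of_le hαxφ hx) hy
    have hanti : StrictAntiOn (fun t => g t / φ t) (Icc x y) := by
      apply strictAntiOn_of_deriv_neg (convex_Icc x y)
        (fun t ht => ((hQd t (hsub ht)).continuousAt).continuousWithinAt)
      intro t ht
      rw [interior_Icc] at ht
      have htβ : t ∈ Ioo α β := hsub (Ioo_subset_Icc_self ht)
      rw [(hQd t htβ).deriv]
      have hFt : 0 < F t := hFpos' t (lt_of_le_of_lt hx ht.1) htβ.2
      have hW := hWpos t htβ
      nlinarith
    exact hanti ⟨le_rfl, hxy.le⟩ ⟨hxy.le, le_rfl⟩ hxy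
  -- positivity of A := g xφ / φ xφ
  have hGψneg : (∫ s in Ioo α xφ, ψ s * k s * h s) < 0 := by
    have hII : IntervalIntegrable Ψf volume α xφ :=
      hΨfII hαmem (Ioo_subset_Icc_self hxφβ)
    have h2 : 0 < ∫ t in α..xφ, -(ψ t * k t * h t) := by
      apply intervalIntegral.intervalIntegral_pos_of_pos_on hII.neg _ hαxφ
      intro s hs
      have hsc : s ∈ Ioo α c := ⟨hs.1, hs.2.trans hxφc⟩
      have hsβ : s ∈ Ioo α β := ⟨hs.1, hsc.2.trans hcβ⟩
      have := mul_neg_of_pos_of_neg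
        (mul_pos (hψpos s hsβ) (hkpos s hsβ)) (hnegh s hsc)
      show (0:ℝ) < -(ψ s * k s * h s)
      linarith
    rw [intervalIntegral.integral_neg] at h2
    have h3 : (∫ t in α..xφ, ψ t * k t * h t) = ∫ s in Ioo α xφ, ψ s * k s * h s := by
      rw [intervalIntegral.integral_of_le hαxφ.le, integral_Ioc_eq_integral_Ioo]
    rw [h3] at h2
    have h4 : (0:ℝ) < -∫ s in Ioo α xφ, ψ s * k s * h s := h2
    linarith
  have hAeq : g xφ / φ xφ = -(∫ s in Ioo α xφ, ψ s * k s * h s) := by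
    have hgx := hg xφ hxφβ
    have hF0 : (∫ s in Ioo xφ β, φ s * k s * h s) = 0 := hFxφ
    rw [hF0] at hgx
    rw [hgx]
    have hφne : φ xφ ≠ 0 := (hφpos xφ hxφβ).ne'
    field_simp
    ring
  have hApos : 0 < g xφ / φ xφ := by rw [hAeq]; linarith
  -- assemble
  refine ⟨xφ, ⟨hαxφ, hxφc⟩, hFxφ, ?_, ?_, ?_, hApos, ?_, ?_⟩
  · -- uniqueness
    intro y hy hFy
    by_contra hne
    have h0 : F y = 0 := hFy
    rcases lt_or_gt_of_ne hne with hlt | hgt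
    · have h2 : F y < F xφ := hFmono ⟨hy.1.le, hy.2.le⟩ ⟨hαxφ.le, hxφc.le⟩ hlt
      rw [h0, hFxφ] at h2; exact lt_irrefl 0 h2
    · have h2 : F xφ < F y := hFmono ⟨hαxφ.le, hxφc.le⟩ ⟨hy.1.le, hy.2.le⟩ hgt
      rw [h0, hFxφ] at h2; exact lt_irrefl 0 h2
  · -- strict mono on (α, xφ)
    intro x hx y hy hxy
    exact hQlt x y hx.1 hxy hy.2.le
  · -- strict anti on (xφ, β)
    intro x hx y hy hxy
    exact hQgt x y hx.1.le hxy hy.2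
  · -- majorisation
    intro x hx
    have hφx : 0 < φ x := hφpos x hx
    have hgQ : g x = g x / φ x * φ x := (div_mul_cancel₀ _ hφx.ne').symm
    rcases lt_trichotomy x xφ with hlt | heq | hgt
    · have := hQlt x xφ hx.1 hlt le_rfl
      rw [hgQ]
      exact le_of_lt (mul_lt_mul_of_pos_right this hφx)
    · subst heq; exact le_of_eq hgQ
    · have := hQgt xφ x le_rfl hgt hx.2
      rw [hgQ]
      exact le_of_lt (mul_lt_mul_of_pos_right this hφx)
  · -- equality only at xφ
    intro x hx hgx
    by_contra hne
    have hφx : 0 < φ x := hφpos x hx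
    have hQx : g x / φ x = g xφ / φ xφ := by
      rw [hgx]; exact mul_div_cancel_right₀ _ hφx.ne'
    rcases lt_or_gt_of_ne hne with hlt | hgt
    · have := hQlt x xφ hx.1 hlt le_rfl
      rw [hQx] at this; exact lt_irrefl _ this
    · have := hQgt xφ x le_rfl hgt hx.2
      rw [hQx] at this; exact lt_irrefl _ this
end

section
/- The function g is differentiable on (α, β), with derivative g'(x) = −( φ'(x)·∫_{(α,x)} Ψ(s)·h(s) ds + ψ'(x)·∫_{(x,β)} Φ(s)·h(s) ds ) for every x ∈ (α, β); consequently, for every x ∈ (α, β): g'(x)·φ(x) − g(x)·φ'(x) = −W(x)·∫_{(x,β)} Φ(s)·h(s) ds and g'(x)·ψ(x) − g(x)·ψ'(x) = W(x)·∫_{(α,x)} Ψ(s)·h(s) ds. (These are the identities (3.6)–(3.9) of the paper in the case of an absolutely continuous measure 𝓛g.) -/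
open MeasureTheory Set

/-- Identities (3.6)–(3.9) of the paper, in the absolutely continuous case:
differentiability of `g` and the formulas for `g'φ − gφ'` and `g'ψ − gψ'`. -/
theorem stmt_6
    (α β : ℝ) (hαβ : α < β)
    (φ ψ φ' ψ' k h g : ℝ → ℝ)
    (hφd : ∀ x ∈ Ioo α β, HasDerivAt φ (φ' x) x)
    (hψd : ∀ x ∈ Ioo α β, HasDerivAt ψ (ψ' x) x)
    (hφpos : ∀ x ∈ Ioo α β, 0 < φ x)
    (hφ'neg : ∀ x ∈ Ioo α β, φ' x < 0)
    (hψpos : ∀ x ∈ Ioo α β, 0 < ψ x)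
    (hψ'pos : ∀ x ∈ Ioo α β, 0 < ψ' x)
    (hk : ContinuousOn k (Ioo α β))
    (hkpos : ∀ x ∈ Ioo α β, 0 < k x)
    (hh : ContinuousOn h (Ioo α β))
    (hΦh : IntegrableOn (fun s => φ s * k s * h s) (Ioo α β))
    (hΨh : IntegrableOn (fun s => ψ s * k s * h s) (Ioo α β))
    (hg : ∀ x ∈ Ioo α β, g x =
      -(φ x * (∫ s in Ioo α x, ψ s * k s * h s) +
        ψ x * (∫ s in Ioo x β, φ s * k s * h s))) :
    ∀ x ∈ Ioo α β, ∃ g' : ℝ,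
      g' = -(φ' x * (∫ s in Ioo α x, ψ s * k s * h s) +
             ψ' x * (∫ s in Ioo x β, φ s * k s * h s)) ∧
      HasDerivAt g g' x ∧
      g' * φ x - g x * φ' x =
        -(φ x * ψ' x - φ' x * ψ x) * ∫ s in Ioo x β, φ s * k s * h s ∧
      g' * ψ x - g x * ψ' x =
        (φ x * ψ' x - φ' x * ψ x) * ∫ s in Ioo α x, ψ s * k s * h s := by
  intro x hx
  set F : ℝ → ℝ := fun s => ψ s * k s * h s with hF
  set G : ℝ → ℝ → ℝ := fun _ _ => 0 with hGdummy
  have hopen : IsOpen (Ioo α β) := isOpen_Ioo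
  have hφc : ContinuousOn φ (Ioo α β) := fun y hy =>
    ((hφd y hy).continuousAt).continuousWithinAt
  have hψc : ContinuousOn ψ (Ioo α β) := fun y hy =>
    ((hψd y hy).continuousAt).continuousWithinAt
  have hFc : ContinuousOn F (Ioo α β) := (hψc.mul hk).mul hh
  have hGc : ContinuousOn (fun s => φ s * k s * h s) (Ioo α β) := (hφc.mul hk).mul hh
  -- interval integrability
  have hIF : IntervalIntegrable F volume α x := by
    rw [intervalIntegrable_iff_integrableOn_Ioc_of_le hx.1.le]
    refine (hΨh.mono_set ?_).congr_set_ae (Ioo_ae_eq_Ioc (a := α) (b := x)).symm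
    exact Ioo_subset_Ioo le_rfl hx.2.le
  have hIG : IntervalIntegrable (fun s => φ s * k s * h s) volume x β := by
    rw [intervalIntegrable_iff_integrableOn_Ioc_of_le hx.2.le]
    refine (hΦh.mono_set ?_).congr_set_ae (Ioo_ae_eq_Ioc (a := x) (b := β)).symm
    exact Ioo_subset_Ioo hx.1.le le_rfl
  -- FTC derivatives
  have hA : HasDerivAt (fun y => ∫ s in α..y, F s) (F x) x :=
    intervalIntegral.integral_hasDerivAt_right hIF
      (hFc.stronglyMeasurableAtFilter hopen x hx)
      (hFc.continuousAt (hopen.mem_nhds hx))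
  have hB : HasDerivAt (fun y => ∫ s in y..β, φ s * k s * h s)
      (-(φ x * k x * h x)) x :=
    intervalIntegral.integral_hasDerivAt_left hIG
      (hGc.stronglyMeasurableAtFilter hopen x hx)
      (hGc.continuousAt (hopen.mem_nhds hx))
  -- equality of the Ioo integrals with interval integrals on Ioo α β
  have hAeq : ∀ y ∈ Ioo α β, (∫ s in Ioo α y, F s) = ∫ s in α..y, F s := by
    intro y hy
    rw [intervalIntegral.integral_of_le hy.1.le, integral_Ioc_eq_integral_Ioo]
  have hBeq : ∀ y ∈ Ioo α β,
      (∫ s in Ioo y β, φ s * k s * h s) = ∫ s in y..β, φ s * k s * h s := by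
    intro y hy
    rw [intervalIntegral.integral_of_le hy.2.le, integral_Ioc_eq_integral_Ioo]
  -- g agrees with the smooth expression near x
  have hev : g =ᶠ[nhds x]
      (fun y => -(φ y * (∫ s in α..y, F s) +
        ψ y * (∫ s in y..β, φ s * k s * h s))) := by
    filter_upwards [hopen.mem_nhds hx] with y hy
    rw [hg y hy, hAeq y hy, hBeq y hy]
  have hder : HasDerivAt
      (fun y => -(φ y * (∫ s in α..y, F s) +
        ψ y * (∫ s in y..β, φ s * k s * h s)))
      (-((φ' x * (∫ s in α..x, F s) + φ x * F x) +
        (ψ' x * (∫ s in x..β, φ s * k s * h s) + ψ x * (-(φ x * k x * h x))))) x :=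
    (((hφd x hx).mul hA).add ((hψd x hx).mul hB)).neg
  refine ⟨-(φ' x * (∫ s in Ioo α x, F s) +
      ψ' x * (∫ s in Ioo x β, φ s * k s * h s)), rfl, ?_, ?_, ?_⟩
  · refine HasDerivAt.congr_of_eventuallyEq ?_ hev
    convert hder using 1
    case e'_4 => rfl
    case e'_5 => rfl
    rw [hAeq x hx, hBeq x hx]
    simp only [hF]
    ring
  · rw [hg x hx]; ring
  · rw [hg x hx]; ring
end

section
/- Suppose x_φ ∈ (α, β) satisfies ∫_{(x_φ,β)} Φ(s)·h(s) ds = 0 (stationarity of g/φ at x_φ), and suppose that (ψ(x)/φ(x))·∫_{(x,β)} Φ(s)·h(s) ds tends to 0 as x ↑ β. Then: (i) g(x_φ)/φ(x_φ) = −∫_{(α,x_φ)} Ψ(s)·h(s) ds; (ii) g(x)/φ(x) tends to −∫_{(α,β)} Ψ(s)·h(s) ds as x ↑ β; and (iii) ∫_{(x_φ,β)} Ψ(s)·h(s) ds = g(x_φ)/φ(x_φ) − lim_{x↑β} g(x)/φ(x). In particular, if lim_{x↑β} g(x)/φ(x) ≥ g(x_φ)/φ(x_φ), then ∫_{(x_φ,β)}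 Ψ(s)·h(s) ds ≤ 0. (This is the key computation in the existence part of the proof of Lemma A.1.) -/
open MeasureTheory Set Filter

lemma ioo_eq_ii {f : ℝ → ℝ} {x y : ℝ} (hxy : x ≤ y) :
    (∫ s in Ioo x y, f s) = ∫ s in x..y, f s := by
  rw [intervalIntegral.integral_of_le hxy, setIntegral_congr_set Ioo_ae_eq_Ioc]

lemma integral_split {α β : ℝ} {f : ℝ → ℝ} (hf : IntegrableOn f (Ioo α β))
    {x : ℝ} (hx : x ∈ Ioo α β) :
    (∫ s in Ioo α β, f s) = (∫ s in Ioo α x, f s) + ∫ s in Ioo x β, f s := by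
  have hdisj : Disjoint (Ioo α x) (Ico x β) :=
    Set.disjoint_left.mpr fun s hs hs' => absurd hs.2 (not_lt.mpr hs'.1)
  rw [← Ioo_union_Ico_eq_Ioo hx.1 hx.2.le,
      setIntegral_union hdisj measurableSet_Ico
        (hf.mono_set (Ioo_subset_Ioo le_rfl hx.2.le))
        (hf.mono_set fun s hs => ⟨hx.1.trans_le hs.1, hs.2⟩)]
  congr 1
  exact setIntegral_congr_set Ioo_ae_eq_Ico.symm

lemma tendsto_tail {α β : ℝ} (hαβ : α < β) {f : ℝ → ℝ}
    (hf : IntegrableOn f (Ioo α β)) :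
    Tendsto (fun x => ∫ s in Ioo x β, f s) (nhdsWithin β (Iio β)) (nhds 0) := by
  set a := (α + β) / 2 with ha
  have haα : α < a := by rw [ha]; linarith
  have haβ : a < β := by rw [ha]; linarith
  have hint : IntervalIntegrable f volume a β := by
    rw [intervalIntegrable_iff_integrableOn_Ioo_of_le haβ.le]
    exact hf.mono_set (Ioo_subset_Ioo haα.le le_rfl)
  have hcont : ContinuousWithinAt (fun b => ∫ t in a..b, f t) (Icc a β) β := by
    apply intervalIntegral.continuousWithinAt_primitive (by simp)
    simpa [min_def, max_def, haβ.le, le_refl] using hint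
  have h1 : Tendsto (fun b => ∫ t in a..b, f t) (nhdsWithin β (Iio β))
      (nhds (∫ t in a..β, f t)) := by
    refine hcont.tendsto.mono_left ?_
    rw [← nhdsWithin_Ioo_eq_nhdsLT haβ]
    exact nhdsWithin_mono _ Ioo_subset_Icc_self
  have h2 : Tendsto (fun x => (∫ t in a..β, f t) - ∫ t in a..x, f t)
      (nhdsWithin β (Iio β)) (nhds 0) := by
    have := Tendsto.sub (tendsto_const_nhds (x := ∫ t in a..β, f t)) h1
    rwa [sub_self] at this
  refine Tendsto.congr' ?_ h2
  filter_upwards [Ioo_mem_nhdsLT_of_mem (show β ∈ Ioc a β from ⟨haβ, le_rfl⟩)]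
    with x hx
  have hintax : IntervalIntegrable f volume a x := by
    rw [intervalIntegrable_iff_integrableOn_Ioo_of_le hx.1.le]
    exact hf.mono_set (Ioo_subset_Ioo haα.le hx.2.le)
  have hintxβ : IntervalIntegrable f volume x β := by
    rw [intervalIntegrable_iff_integrableOn_Ioo_of_le hx.2.le]
    exact hf.mono_set (Ioo_subset_Ioo (haα.trans hx.1).le le_rfl)
  rw [ioo_eq_ii hx.2.le, ← intervalIntegral.integral_add_adjacent_intervals hintax hintxβ]
  ring

/-- The key computation in the existence part of the proof of Lemma A.1. -/
theorem stmt_7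
    (α β : ℝ) (hαβ : α < β)
    (φ ψ φ' ψ' k h g : ℝ → ℝ)
    (hφd : ∀ x ∈ Ioo α β, HasDerivAt φ (φ' x) x)
    (hψd : ∀ x ∈ Ioo α β, HasDerivAt ψ (ψ' x) x)
    (hφpos : ∀ x ∈ Ioo α β, 0 < φ x)
    (hφ'neg : ∀ x ∈ Ioo α β, φ' x < 0)
    (hψpos : ∀ x ∈ Ioo α β, 0 < ψ x)
    (hψ'pos : ∀ x ∈ Ioo α β, 0 < ψ' x)
    (hk : ContinuousOn k (Ioo α β))
    (hkpos : ∀ x ∈ Ioo α β, 0 < k x)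
    (hh : ContinuousOn h (Ioo α β))
    (hΦh : IntegrableOn (fun s => φ s * k s * h s) (Ioo α β))
    (hΨh : IntegrableOn (fun s => ψ s * k s * h s) (Ioo α β))
    (hg : ∀ x ∈ Ioo α β, g x =
      -(φ x * (∫ s in Ioo α x, ψ s * k s * h s) +
        ψ x * (∫ s in Ioo x β, φ s * k s * h s)))
    (xφ : ℝ) (hxφ : xφ ∈ Ioo α β)
    (hstat : (∫ s in Ioo xφ β, φ s * k s * h s) = 0)
    (htend : Tendsto (fun x => ψ x / φ x * ∫ s in Ioo x β, φ s * k s * h s)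
      (nhdsWithin β (Iio β)) (nhds 0)) :
    g xφ / φ xφ = -∫ s in Ioo α xφ, ψ s * k s * h s ∧
    Tendsto (fun x => g x / φ x) (nhdsWithin β (Iio β))
      (nhds (-∫ s in Ioo α β, ψ s * k s * h s)) ∧
    (∫ s in Ioo xφ β, ψ s * k s * h s) =
      g xφ / φ xφ - (-∫ s in Ioo α β, ψ s * k s * h s) ∧
    (g xφ / φ xφ ≤ -∫ s in Ioo α β, ψ s * k s * h s →
      (∫ s in Ioo xφ β, ψ s * k s * h s) ≤ 0) := by
  have hφne : φ xφ ≠ 0 := (hφpos xφ hxφ).ne'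
  have e1 : g xφ / φ xφ = -∫ s in Ioo α xφ, ψ s * k s * h s := by
    rw [hg xφ hxφ, hstat]
    field_simp
    ring
  have split := integral_split hΨh hxφ
  have e3 : (∫ s in Ioo xφ β, ψ s * k s * h s) =
      g xφ / φ xφ - (-∫ s in Ioo α β, ψ s * k s * h s) := by
    rw [e1]; linarith
  refine ⟨e1, ?_, e3, fun hle => by linarith [e3]⟩
  -- part (ii)
  have htail := tendsto_tail hαβ hΨh
  have hI1 : Tendsto (fun x => ∫ s in Ioo α x, ψ s * k s * h s)
      (nhdsWithin β (Iio β)) (nhds (∫ s in Ioo α β, ψ s * k s * h s)) := by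
    have h2 := Tendsto.sub
      (tendsto_const_nhds (x := ∫ s in Ioo α β, ψ s * k s * h s)) htail
    rw [sub_zero] at h2
    refine Tendsto.congr' ?_ h2
    filter_upwards [Ioo_mem_nhdsLT_of_mem (show β ∈ Ioc α β from ⟨hαβ, le_rfl⟩)]
      with x hx
    have := integral_split hΨh hx
    linarith
  have hcomb : Tendsto
      (fun x => -((∫ s in Ioo α x, ψ s * k s * h s) +
        ψ x / φ x * ∫ s in Ioo x β, φ s * k s * h s))
      (nhdsWithin β (Iio β)) (nhds (-∫ s in Ioo α β, ψ s * k s * h s)) := by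
    have := (hI1.add htend).neg
    rwa [add_zero] at this
  refine Tendsto.congr' ?_ hcomb
  filter_upwards [Ioo_mem_nhdsLT_of_mem (show β ∈ Ioc α β from ⟨hαβ, le_rfl⟩)]
    with x hx
  have hφx : φ x ≠ 0 := (hφpos x hx).ne'
  rw [hg x hx]
  field_simp
end

section
/- Let c < d be real numbers and let f : ℝ → ℝ be continuous on (c, d). Assume that at every point x ∈ (c, d) with f(x) = 0, the function f is differentiable at x and f'(x) > 0 (i.e. the graph of f can only cross zero from below). Then f has at most one zero in (c, d). (This is the uniqueness mechanism used in the proof of Lemma A.1: since at every crossing of the curves l_φ and l_ψ the curve l_φ crosses l_ψ strictly from below, there can be at most one crossing.) -/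
open Set Topology Filter

private lemma pos_right_aux (f : ℝ → ℝ) (z f' : ℝ) (h : HasDerivAt f f' z)
    (hf' : 0 < f') (hz : f z = 0) (b : ℝ) (hb : z < b) :
    ∃ a ∈ Ioo z b, 0 < f a := by
  have h1 : ∀ᶠ t in 𝓝[≠] z, 0 < slope f z t :=
    (hasDerivAt_iff_tendsto_slope.mp h).eventually (eventually_gt_nhds hf')
  have h2 : ∀ᶠ t in 𝓝[>] z, 0 < slope f z t :=
    h1.filter_mono (nhdsWithin_mono z (fun t ht => ne_of_gt ht))
  have h3 : Ioo z b ∈ 𝓝[>] z := Ioo_mem_nhdsGT_of_mem ⟨le_refl z, hb⟩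
  obtain ⟨a, ha, haI⟩ := (h2.and (Filter.eventually_of_mem h3 (fun t ht => ht))).exists
  refine ⟨a, haI, ?_⟩
  have hslope : slope f z a = f a / (a - z) := by
    simp [slope_def_field, hz, div_eq_div_iff]
  rw [hslope] at ha
  have hpos : 0 < a - z := sub_pos.mpr haI.1
  rcases div_pos_iff.mp ha with ⟨h1', _⟩ | ⟨_, h2'⟩ <;> linarith

private lemma neg_left_aux (f : ℝ → ℝ) (z f' : ℝ) (h : HasDerivAt f f' z)
    (hf' : 0 < f') (hz : f z = 0) (b : ℝ) (hb : b < z) :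
    ∃ a ∈ Ioo b z, f a < 0 := by
  have h1 : ∀ᶠ t in 𝓝[≠] z, 0 < slope f z t :=
    (hasDerivAt_iff_tendsto_slope.mp h).eventually (eventually_gt_nhds hf')
  have h2 : ∀ᶠ t in 𝓝[<] z, 0 < slope f z t :=
    h1.filter_mono (nhdsWithin_mono z (fun t ht => ne_of_lt ht))
  have h3 : Ioo b z ∈ 𝓝[<] z := Ioo_mem_nhdsLT_of_mem ⟨hb, le_refl z⟩
  obtain ⟨a, ha, haI⟩ := (h2.and (Filter.eventually_of_mem h3 (fun t ht => ht))).exists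
  refine ⟨a, haI, ?_⟩
  have hslope : slope f z a = f a / (a - z) := by
    simp [slope_def_field, hz]
  rw [hslope] at ha
  have hneg : a - z < 0 := sub_neg.mpr haI.2
  rcases div_pos_iff.mp ha with ⟨_, h2'⟩ | ⟨h1', _⟩ <;> linarith

private lemma key_aux
    (c d : ℝ) (f : ℝ → ℝ)
    (hf : ContinuousOn f (Ioo c d))
    (hcross : ∀ x ∈ Ioo c d, f x = 0 → ∃ f' : ℝ, HasDerivAt f f' x ∧ 0 < f')
    (x y : ℝ) (hx : x ∈ Ioo c d) (hy : y ∈ Ioo c d)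
    (hfx : f x = 0) (hfy : f y = 0) (hxy : x < y) : False := by
  -- step 1: find b ∈ (x, y) with f b < 0
  obtain ⟨fy', hdy, hfy'⟩ := hcross y hy hfy
  obtain ⟨b, hbI, hbneg⟩ := neg_left_aux f y fy' hdy hfy' hfy x hxy
  -- interval containments
  have hsub : Icc x b ⊆ Ioo c d := fun t ht =>
    ⟨lt_of_lt_of_le hx.1 ht.1, lt_of_le_of_lt ht.2 (lt_trans hbI.2 hy.2)⟩
  -- step 2: set of zeros in [x, b]
  set Z : Set ℝ := {t ∈ Icc x b | f t = 0} with hZ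
  have hZne : Z.Nonempty := ⟨x, ⟨le_refl x, le_of_lt hbI.1⟩, hfx⟩
  have hZbdd : BddAbove Z := ⟨b, fun t ht => ht.1.2⟩
  have hZclosed : IsClosed Z := by
    have : Z = Icc x b ∩ f ⁻¹' {0} := by
      ext t; simp [hZ, Set.mem_setOf_eq, and_comm]
    rw [this]
    exact (hf.mono hsub).preimage_isClosed_of_isClosed isClosed_Icc isClosed_singleton
  set z := sSup Z with hz
  have hzZ : z ∈ Z := hZclosed.csSup_mem hZne hZbdd
  have hzb : z ≤ b := hzZ.1.2
  have hzx : x ≤ z := hzZ.1.1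
  have hfz : f z = 0 := hzZ.2
  have hzltb : z < b := lt_of_le_of_ne hzb (fun h => by rw [h] at hfz; linarith)
  -- step 3: no zeros in (z, b]
  have hnozero : ∀ t ∈ Ioc z b, f t ≠ 0 := by
    intro t ht hft
    have : t ∈ Z := ⟨⟨le_trans hzx (le_of_lt ht.1), ht.2⟩, hft⟩
    exact absurd (le_csSup hZbdd this) (not_le.mpr ht.1)
  -- step 4: point a ∈ (z, b) with f a > 0
  have hzIn : z ∈ Ioo c d := hsub ⟨hzx, hzb⟩
  obtain ⟨fz', hdz, hfz'⟩ := hcross z hzIn hfz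
  obtain ⟨a, haI, hapos⟩ := pos_right_aux f z fz' hdz hfz' hfz b hzltb
  -- step 5: IVT between a and b
  have hab : a ≤ b := le_of_lt haI.2
  have hsub2 : Icc a b ⊆ Ioo c d := fun t ht =>
    hsub ⟨le_trans (le_trans hzx (le_of_lt haI.1)) ht.1, ht.2⟩
  have hivt := intermediate_value_Icc' hab (hf.mono hsub2)
  have h0 : (0 : ℝ) ∈ Icc (f b) (f a) := ⟨le_of_lt hbneg, le_of_lt hapos⟩
  obtain ⟨w, hwI, hfw⟩ := hivt h0
  exact hnozero w ⟨lt_of_lt_of_le haI.1 hwI.1, hwI.2⟩ hfw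

/-- Uniqueness mechanism in the proof of Lemma A.1: a continuous function on
an open interval that can only cross zero strictly from below has at most one
zero there. -/
theorem stmt_8
    (c d : ℝ) (hcd : c < d) (f : ℝ → ℝ)
    (hf : ContinuousOn f (Ioo c d))
    (hcross : ∀ x ∈ Ioo c d, f x = 0 → ∃ f' : ℝ, HasDerivAt f f' x ∧ 0 < f') :
    ∀ x ∈ Ioo c d, ∀ y ∈ Ioo c d, f x = 0 → f y = 0 → x = y := by
  intro x hx y hy hfx hfy
  rcases lt_trichotomy x y with h | h | h
  · exact absurd (key_aux c d f hf hcross x y hx hy hfx hfy h) (fun h => h)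
  · exact h
  · exact absurd (key_aux c d f hf hcross y x hy hx hfy hfx h) (fun h => h)
end

section
/- Let x > 0, σ > 0, j > 0 and b, r ∈ ℝ. For t > 0 let ν_t denote the Gaussian measure on ℝ with mean 0 and variance t. Then the integral ∫_{(0,∞)} e^{−r·t} · x^j · e^{j·(b − σ²/2)·t} · ( ∫_ℝ e^{j·σ·y} dν_t(y) ) dt is finite if and only if r > j·b + (1/2)·j·(j − 1)·σ². (This is the paper's computation of the expected discounted power payoff E_x[∫₀^∞ e^{−rt} X_t^j dt] for a geometric Brownian motion X with drift b and volatility σ, establishing when 𝓛g is (φ,ψ)-integrable for g(x) = x^j.) -/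
open MeasureTheory ProbabilityTheory Set

lemma gaussianPDFReal_mul_exp (a : ℝ) {v : NNReal} (hv : v ≠ 0) (y : ℝ) :
    Real.exp (a * y) * gaussianPDFReal 0 v y
      = Real.exp (a ^ 2 * v / 2) * gaussianPDFReal (a * v) v y := by
  have hv' : (v : ℝ) ≠ 0 := by exact_mod_cast hv
  simp only [gaussianPDFReal]
  rw [mul_comm (Real.exp (a * y)), mul_assoc, ← Real.exp_add, mul_left_comm, mul_assoc,
    ← Real.exp_add]
  congr 2
  field_simp
  ring

lemma gaussian_mgf (a : ℝ) (v : NNReal) :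
    ∫ y : ℝ, Real.exp (a * y) ∂(gaussianReal 0 v) = Real.exp (a ^ 2 * v / 2) := by
  by_cases hv : v = 0
  · simp [hv, gaussianReal_zero_var]
  · rw [gaussianReal_of_var_ne_zero _ hv]
    have hpdf : gaussianPDF 0 v = fun y => ((gaussianPDFReal 0 v y).toNNReal : ENNReal) := by
      ext y; simp [gaussianPDF, ENNReal.ofReal]
    rw [hpdf, integral_withDensity_eq_integral_smul
      ((measurable_gaussianPDFReal 0 v).real_toNNReal)]
    have : ∀ y : ℝ, (Real.toNNReal (gaussianPDFReal 0 v y)) • Real.exp (a * y)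
        = Real.exp (a ^ 2 * v / 2) * gaussianPDFReal (a * v) v y := by
      intro y
      rw [NNReal.smul_def, smul_eq_mul, Real.coe_toNNReal _ (gaussianPDFReal_nonneg 0 v y),
        mul_comm, gaussianPDFReal_mul_exp a hv]
    simp_rw [this]
    rw [integral_const_mul, integral_gaussianPDFReal_eq_one _ hv, mul_one]

lemma integrableOn_exp_mul_Ioi_iff (c : ℝ) :
    IntegrableOn (fun t : ℝ => Real.exp (c * t)) (Ioi 0) ↔ c < 0 := by
  constructor
  · intro h
    by_contra hc
    push_neg at hc
    have h1 : IntegrableOn (fun _ : ℝ => (1 : ℝ)) (Ioi 0) := by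
      refine Integrable.mono h aestronglyMeasurable_const ?_
      filter_upwards [ae_restrict_mem measurableSet_Ioi] with t ht
      simp only [norm_one, Real.norm_eq_abs, abs_of_pos (Real.exp_pos _)]
      exact Real.one_le_exp (mul_nonneg hc (le_of_lt ht))
    rw [integrableOn_const_iff] at h1
    simp [Real.volume_Ioi] at h1
  · intro hc
    have := exp_neg_integrableOn_Ioi 0 (neg_pos.mpr hc)
    simpa using this

/-- Finiteness of the expected discounted power payoff
`E_x[∫₀^∞ e^{−rt} X_t^j dt]` for a geometric Brownian motion `X` with drift
`b` and volatility `σ` is equivalent to `r > jb + ½j(j−1)σ²`. -/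
theorem stmt_14
    (x σ j b r : ℝ) (hx : 0 < x) (hσ : 0 < σ) (hj : 0 < j) :
    IntegrableOn
      (fun t : ℝ => Real.exp (-r * t) * x ^ j * Real.exp (j * (b - σ^2/2) * t) *
        ∫ y : ℝ, Real.exp (j * σ * y) ∂(gaussianReal 0 (Real.toNNReal t)))
      (Ioi 0) ↔
    r > j * b + (1/2) * j * (j - 1) * σ^2 := by
  set c : ℝ := -r + j * b + (1/2) * j * (j - 1) * σ^2 with hc
  have heq : EqOn
      (fun t : ℝ => Real.exp (-r * t) * x ^ j * Real.exp (j * (b - σ^2/2) * t) *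
        ∫ y : ℝ, Real.exp (j * σ * y) ∂(gaussianReal 0 (Real.toNNReal t)))
      (fun t : ℝ => x ^ j * Real.exp (c * t)) (Ioi 0) := by
    intro t ht
    have ht' : (0:ℝ) ≤ t := le_of_lt ht
    simp only [gaussian_mgf (j * σ) (Real.toNNReal t), Real.coe_toNNReal _ ht']
    rw [mul_comm (Real.exp (-r * t)) (x ^ j), mul_assoc, mul_assoc, ← Real.exp_add,
      ← Real.exp_add]
    congr 1
    rw [hc]
    ring
  rw [integrableOn_congr_fun heq measurableSet_Ioi]
  have hxj : x ^ j ≠ 0 := ne_of_gt (Real.rpow_pos_of_pos hx j)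
  rw [show (fun t : ℝ => x ^ j * Real.exp (c * t))
      = (x ^ j) • (fun t : ℝ => Real.exp (c * t)) from rfl]
  rw [IntegrableOn, integrable_smul_iff hxj, ← IntegrableOn,
    integrableOn_exp_mul_Ioi_iff, hc]
  constructor <;> intro h <;> linarith
end
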